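/- arXiv:2210.08390 — 3 statements merged into one kernel-verified Lean document; each statement's English description precedes it below -/
import Mathlib

section
/- Let k ≥ 2, let α : Fin k → ℝ be nonincreasing with α_k ≥ 0, and let c₁ ≥ c₂ ≥ … ≥ c_{k−1} ≥ 0 be the sorted bids of the other k−1 agents. For a value v ≥ 0, suppose q ∈ {1,…,k} is the truthful position of an agent with value v, i.e., c_{q−1} ≥ v (when q > 1) and v ≥ c_q (when q < k). Define the utility of occupying position p as Φ(p) = v * α_p − ∑_{j=p}^{k−1} c_j * (α_j − α_{j+1}). Then Φ(q) ≥ Φ(p) for every position p ∈ {1,…,k}; that is, the position obtained by bidding one's true value maximizes utility against any fixed bids of the other agents. -/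
section aux
variable {n : ℕ} (α : Fin (n + 1) → ℝ) (c : Fin n → ℝ) (v : ℝ)

noncomputable def smapfPhi (p : Fin (n + 1)) : ℝ :=
  v * α p - ∑ j ∈ Finset.univ.filter (fun j : Fin n => p ≤ j.castSucc),
      c j * (α j.castSucc - α j.succ)

lemma smapfPhi_step (j : Fin n) :
    smapfPhi α c v j.succ - smapfPhi α c v j.castSucc
      = (c j - v) * (α j.castSucc - α j.succ) := by
  have hfil : (Finset.univ.filter (fun j' : Fin n => j.castSucc ≤ j'.castSucc))
      = insert j (Finset.univ.filter (fun j' : Fin n => j.succ ≤ j'.castSucc)) := by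
    ext j'
    simp only [Finset.mem_insert, Finset.mem_filter, Finset.mem_univ, true_and,
      Fin.castSucc_le_castSucc_iff, Fin.succ_le_castSucc_iff]
    rw [le_iff_lt_or_eq]
    tauto
  have hnot : j ∉ Finset.univ.filter (fun j' : Fin n => j.succ ≤ j'.castSucc) := by
    simp [Fin.succ_le_castSucc_iff]
  unfold smapfPhi
  rw [hfil, Finset.sum_insert hnot]
  ring

end aux

section aux2
variable {n : ℕ} {α : Fin (n + 1) → ℝ} {c : Fin n → ℝ} {v : ℝ}

lemma smapfPhi_mono_aux (hα : Antitone α) :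
    ∀ (m : ℕ) (a b : Fin (n + 1)), a.val + m = b.val →
      (∀ j : Fin n, a ≤ j.castSucc → j.succ ≤ b → v ≤ c j) →
      smapfPhi α c v a ≤ smapfPhi α c v b := by
  intro m
  induction m with
  | zero => intro a b hab _; have : a = b := Fin.ext (by omega); rw [this]
  | succ m ih =>
    intro a b hab h
    have hjlt : a.val + m < n := by omega
    set j : Fin n := ⟨a.val + m, hjlt⟩ with hj
    have hb : b = j.succ := Fin.ext (by simp [hj]; omega)
    have h1 : smapfPhi α c v a ≤ smapfPhi α c v j.castSucc := by
      refine ih a j.castSucc (by simp [hj]) ?_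
      intro j' h1 h2
      exact h j' h1 (h2.trans (by rw [hb]; exact (Fin.castSucc_le_succ j)))
    have hvc : v ≤ c j := h j (by rw [Fin.le_def]; simp [hj]) (le_of_eq hb.symm)
    have hstep := smapfPhi_step α c v j
    have hαj : α j.succ ≤ α j.castSucc := hα (Fin.castSucc_le_succ j)
    rw [hb]
    nlinarith [mul_nonneg (sub_nonneg.2 hvc) (sub_nonneg.2 hαj)]

lemma smapfPhi_anti_aux (hα : Antitone α) :
    ∀ (m : ℕ) (a b : Fin (n + 1)), a.val + m = b.val →
      (∀ j : Fin n, a ≤ j.castSucc → j.succ ≤ b → c j ≤ v) →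
      smapfPhi α c v b ≤ smapfPhi α c v a := by
  intro m
  induction m with
  | zero => intro a b hab _; have : a = b := Fin.ext (by omega); rw [this]
  | succ m ih =>
    intro a b hab h
    have hjlt : a.val + m < n := by omega
    set j : Fin n := ⟨a.val + m, hjlt⟩ with hj
    have hb : b = j.succ := Fin.ext (by simp [hj]; omega)
    have h1 : smapfPhi α c v j.castSucc ≤ smapfPhi α c v a := by
      refine ih a j.castSucc (by simp [hj]) ?_
      intro j' h1 h2
      exact h j' h1 (h2.trans (by rw [hb]; exact (Fin.castSucc_le_succ j)))
    have hvc : c j ≤ v := h j (by rw [Fin.le_def]; simp [hj]) (le_of_eq hb.symm)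
    have hstep := smapfPhi_step α c v j
    have hαj : α j.succ ≤ α j.castSucc := hα (Fin.castSucc_le_succ j)
    rw [hb]
    nlinarith [mul_nonneg (sub_nonneg.2 hvc) (sub_nonneg.2 hαj)]

end aux2

/-- Strategy-proofness of the SocialMAPF conflict-resolution auction (k = n+1 ≥ 2 agents):
positions are `Fin (n+1)` (zero-indexed turns), `α` are the nonincreasing turn rewards
with last reward nonnegative, and `c : Fin n → ℝ` are the other agents' bids sorted
nonincreasingly. The utility of occupying position `p` is
`Φ p = v * α p − ∑_{j ≥ p} c j * (α j − α (j+1))`.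
If `q` is the truthful position of an agent with value `v` (the bid just above `q` is
`≥ v`, and the bid at `q` is `≤ v`), then `Φ q ≥ Φ p` for every position `p`. -/
theorem socialmapf_truthful_position_optimal (n : ℕ) (hn : 1 ≤ n)
    (α : Fin (n + 1) → ℝ) (hα : Antitone α) (hαlast : 0 ≤ α (Fin.last n))
    (c : Fin n → ℝ) (hc : Antitone c) (hc0 : ∀ j, 0 ≤ c j)
    (v : ℝ) (hv : 0 ≤ v)
    (q : Fin (n + 1))
    (hq_above : ∀ j : Fin n, j.succ = q → v ≤ c j)
    (hq_below : ∀ j : Fin n, j.castSucc = q → c j ≤ v) :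
    ∀ p : Fin (n + 1),
      v * α p -
          ∑ j ∈ Finset.univ.filter (fun j : Fin n => p ≤ j.castSucc),
            c j * (α j.castSucc - α j.succ) ≤
        v * α q -
          ∑ j ∈ Finset.univ.filter (fun j : Fin n => q ≤ j.castSucc),
            c j * (α j.castSucc - α j.succ) := by
  intro p
  show smapfPhi α c v p ≤ smapfPhi α c v q
  rcases le_total p q with hpq | hqp
  · refine smapfPhi_mono_aux hα (q.val - p.val) p q (by omega) ?_
    intro j h1 h2
    have hq1 : 1 ≤ q.val := by have := h2; rw [Fin.le_def] at this; simp at this; omega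
    have hj0lt : q.val - 1 < n := by omega
    set j0 : Fin n := ⟨q.val - 1, hj0lt⟩ with hj0
    have : v ≤ c j0 := hq_above j0 (Fin.ext (by simp [hj0]; omega))
    refine this.trans (hc ?_)
    rw [Fin.le_def] at h2 ⊢
    simp [hj0] at h2 ⊢
    omega
  · refine smapfPhi_anti_aux hα (p.val - q.val) q p (by omega) ?_
    intro j h1 h2
    have hqn : q.val < n := by rw [Fin.le_def] at h1; simp at h1; omega
    set j0 : Fin n := ⟨q.val, hqn⟩ with hj0
    have : c j0 ≤ v := hq_below j0 (Fin.ext (by simp [hj0]))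
    refine (hc ?_).trans this
    rw [Fin.le_def] at h1 ⊢
    simp [hj0] at h1 ⊢
    omega
end

section
/- Let k ≥ 2, let α : Fin k → ℝ be strictly decreasing with α_k ≥ 0, and let c₁ ≥ c₂ ≥ … ≥ c_{k−1} ≥ 0 be the sorted bids of the other agents. Suppose the truthful position q of an agent with value v ≥ 0 satisfies the strict inequalities c_{q−1} > v (when q > 1) and v > c_q (when q < k). Define Φ(p) = v * α_p − ∑_{j=p}^{k−1} c_j * (α_j − α_{j+1}). Then Φ(q) > Φ(p) for every position p ≠ q; i.e., truthful bidding is a strictly dominant strategy whenever ties are strict. -/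
/-!
Moving the agent one turn down, from `j` to `j + 1`, saves the payment `c j (α j - α (j+1))`
and loses the reward `v (α j - α (j+1))`, so the utility changes by `(v - c j)(α j - α (j+1))`.
As the reward gaps are positive and the bids sorted, this step is a strict gain exactly when
the bid `c j` is below `v`. Hence the utility strictly increases towards the truthful turn `q`
from both sides, and `q` is its unique maximiser.
-/

open Finset

namespace Fin

variable {β : Type*} [Preorder β] {n : ℕ}

theorem apply_lt_apply_of_ne_of_steps {f : Fin (n + 1) → β} {q p : Fin (n + 1)}
    (hup : ∀ j : Fin n, j.succ ≤ q → f j.castSucc < f j.succ)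
    (hdown : ∀ j : Fin n, q ≤ j.castSucc → f j.succ < f j.castSucc) (hpq : p ≠ q) :
    f p < f q := by
  rcases hpq.lt_or_gt with hlt | hgt
  · refine strictMonoOn_of_lt_succ Set.ordConnected_Iic (fun a ha _ hsucc => ?_)
      (Set.mem_Iic.2 hlt.le) Set.self_mem_Iic hlt
    obtain ⟨j, rfl⟩ := exists_castSucc_eq.2 (by simpa [top_eq_last] using ha)
    rw [orderSucc_castSucc] at hsucc ⊢
    exact hup j hsucc
  · refine strictAntiOn_of_succ_lt Set.ordConnected_Ici (fun a ha ha' _ => ?_)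
      Set.self_mem_Ici (Set.mem_Ici.2 hgt.le) hgt
    obtain ⟨j, rfl⟩ := exists_castSucc_eq.2 (by simpa [top_eq_last] using ha)
    rw [orderSucc_castSucc]
    exact hdown j ha'

end Fin

namespace SocialMAPF

variable {n : ℕ} (α : Fin (n + 1) → ℝ) (c : Fin n → ℝ) (v : ℝ)

/- `payment` and `utility` are the paper's `h` and `Φ`, with turns and bids indexed from `0`:
bid `c j` sits between turns `j.castSucc` and `j.succ`. -/
def payment (p : Fin (n + 1)) : ℝ :=
  ∑ j ∈ univ.filter (fun j : Fin n => p ≤ j.castSucc), c j * (α j.castSucc - α j.succ)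

def utility (p : Fin (n + 1)) : ℝ :=
  v * α p - payment α c p

theorem payment_castSucc (j : Fin n) :
    payment α c j.castSucc = c j * (α j.castSucc - α j.succ) + payment α c j.succ := by
  have hfilter : univ.filter (fun i : Fin n => j.castSucc ≤ i.castSucc)
      = insert j (univ.filter (fun i : Fin n => j.succ ≤ i.castSucc)) := by
    simp only [Fin.castSucc_le_castSucc_iff, Fin.succ_le_castSucc_iff, filter_le_eq_Ici,
      filter_lt_eq_Ioi, Ioi_insert]
  rw [payment, hfilter, sum_insert (by simp), payment]

theorem utility_castSucc_sub_utility_succ (j : Fin n) :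
    utility α c v j.castSucc - utility α c v j.succ =
      (v - c j) * (α j.castSucc - α j.succ) := by
  rw [utility, utility, payment_castSucc]
  ring

end SocialMAPF

theorem socialmapf_truthful_strictly_dominant_general (n : ℕ)
    (α : Fin (n + 1) → ℝ) (hα : StrictAnti α)
    (c : Fin n → ℝ) (hc : Antitone c)
    (v : ℝ)
    (q : Fin (n + 1))
    (hq_above : ∀ j : Fin n, j.succ = q → v < c j)
    (hq_below : ∀ j : Fin n, j.castSucc = q → c j < v) :
    ∀ p : Fin (n + 1), p ≠ q →
      v * α p -
          ∑ j ∈ Finset.univ.filter (fun j : Fin n => p ≤ j.castSucc),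
            c j * (α j.castSucc - α j.succ) <
        v * α q -
          ∑ j ∈ Finset.univ.filter (fun j : Fin n => q ≤ j.castSucc),
            c j * (α j.castSucc - α j.succ) := by
  intro p hpq
  have hgap (j : Fin n) : 0 < α j.castSucc - α j.succ := sub_pos.2 (hα j.castSucc_lt_succ)
  have hbid_above (j : Fin n) (hj : j.succ ≤ q) : v < c j := by
    obtain ⟨i, rfl⟩ := Fin.exists_succ_eq.2 ((Fin.succ_pos j).trans_le hj).ne'
    exact (hq_above i rfl).trans_le (hc (Fin.succ_le_succ_iff.1 hj))
  have hbid_below (j : Fin n) (hj : q ≤ j.castSucc) : c j < v := by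
    obtain ⟨i, rfl⟩ := Fin.exists_castSucc_eq.2 (hj.trans_lt (Fin.castSucc_lt_last j)).ne
    exact (hc (Fin.castSucc_le_castSucc_iff.1 hj)).trans_lt (hq_below i rfl)
  refine Fin.apply_lt_apply_of_ne_of_steps (f := SocialMAPF.utility α c v) (fun j hj => ?_)
    (fun j hj => ?_) hpq
  · exact sub_neg.1 <| (SocialMAPF.utility_castSucc_sub_utility_succ α c v j).trans_lt <|
      mul_neg_of_neg_of_pos (sub_neg.2 (hbid_above j hj)) (hgap j)
  · exact sub_pos.1 <| (mul_pos (sub_pos.2 (hbid_below j hj)) (hgap j)).trans_eq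
      (SocialMAPF.utility_castSucc_sub_utility_succ α c v j).symm

/-- Strict dominance of truthful bidding in the SocialMAPF conflict-resolution auction
(k = n+1 ≥ 2 agents): with strictly decreasing turn rewards `α` (last reward
nonnegative) and the other agents' sorted nonnegative bids `c`, if the truthful
position `q` of an agent with value `v` satisfies the strict tie-breaking conditions
(the bid just above `q` is `> v`, the bid at `q` is `< v`), then the truthful
position yields strictly larger utility than every other position. -/
theorem socialmapf_truthful_strictly_dominant (n : ℕ) (hn : 1 ≤ n)
    (α : Fin (n + 1) → ℝ) (hα : StrictAnti α) (hαlast : 0 ≤ α (Fin.last n))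
    (c : Fin n → ℝ) (hc : Antitone c) (hc0 : ∀ j, 0 ≤ c j)
    (v : ℝ) (hv : 0 ≤ v)
    (q : Fin (n + 1))
    (hq_above : ∀ j : Fin n, j.succ = q → v < c j)
    (hq_below : ∀ j : Fin n, j.castSucc = q → c j < v) :
    ∀ p : Fin (n + 1), p ≠ q →
      v * α p -
          ∑ j ∈ Finset.univ.filter (fun j : Fin n => p ≤ j.castSucc),
            c j * (α j.castSucc - α j.succ) <
        v * α q -
          ∑ j ∈ Finset.univ.filter (fun j : Fin n => q ≤ j.castSucc),
            c j * (α j.castSucc - α j.succ) :=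
  socialmapf_truthful_strictly_dominant_general n α hα c hc v q hq_above hq_below
end

section
/- Let k ≥ 2, let α : Fin k → ℝ be nonincreasing with α_k ≥ 0, let c₁ ≥ … ≥ c_{k−1} ≥ 0 be the other agents' sorted bids, and let v ≥ 0 be an agent's value whose truthful position q satisfies v ≥ c_j for all j ≥ q. Then the truthful utility is nonnegative: v * α_q − ∑_{j=q}^{k−1} c_j * (α_j − α_{j+1}) ≥ 0. (Individual rationality: an agent bidding truthfully never receives negative utility from the conflict-resolution auction.) -/
open Finset

theorem Fin.sum_filter_castSucc_ge_sub_succ {M : Type*} [AddCommGroup M] {n : ℕ}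
    (f : Fin (n + 1) → M) (q : Fin (n + 1)) :
    ∑ j ∈ univ.filter (fun j : Fin n => q ≤ j.castSucc), (f j.castSucc - f j.succ) =
      f q - f (Fin.last n) := by
  induction q using Fin.reverseInduction with
  | last => simp
  | cast i ih =>
    have hinsert : univ.filter (fun j : Fin n => i.castSucc ≤ j.castSucc) =
        insert i (univ.filter (fun j : Fin n => i.succ ≤ j.castSucc)) := by
      ext j
      simp only [mem_filter, mem_univ, true_and, mem_insert]
      rw [Fin.castSucc_le_castSucc_iff, Fin.succ_le_castSucc_iff, le_iff_eq_or_lt, eq_comm]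
    rw [hinsert, sum_insert (by simp), ih]
    abel

theorem socialmapf_individually_rational_general (n : ℕ)
    (α : Fin (n + 1) → ℝ) (hα : Antitone α) (hαlast : 0 ≤ α (Fin.last n))
    (c : Fin n → ℝ)
    (v : ℝ) (hv : 0 ≤ v)
    (q : Fin (n + 1))
    (hqv : ∀ j : Fin n, q ≤ j.castSucc → c j ≤ v) :
    0 ≤ v * α q -
        ∑ j ∈ Finset.univ.filter (fun j : Fin n => q ≤ j.castSucc),
          c j * (α j.castSucc - α j.succ) := by
  have hpayment : ∑ j ∈ univ.filter (fun j : Fin n => q ≤ j.castSucc),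
      c j * (α j.castSucc - α j.succ) ≤ v * (α q - α (Fin.last n)) := by
    rw [← Fin.sum_filter_castSucc_ge_sub_succ, mul_sum]
    refine sum_le_sum fun j hj => mul_le_mul_of_nonneg_right (hqv j (mem_filter.mp hj).2) ?_
    exact sub_nonneg.2 (hα j.castSucc_le_succ)
  linarith [mul_nonneg hv hαlast]

/-- Individual rationality of the SocialMAPF conflict-resolution auction
(k = n+1 ≥ 2 agents): with nonincreasing turn rewards `α` (last reward nonnegative)
and the other agents' sorted nonnegative bids `c`, an agent whose truthful position
`q` satisfies `v ≥ c j` for all bid indices `j ≥ q` obtains nonnegative truthful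
utility `v * α q − ∑_{j ≥ q} c j * (α j − α (j+1)) ≥ 0`. -/
theorem socialmapf_individually_rational (n : ℕ) (hn : 1 ≤ n)
    (α : Fin (n + 1) → ℝ) (hα : Antitone α) (hαlast : 0 ≤ α (Fin.last n))
    (c : Fin n → ℝ) (hc : Antitone c) (hc0 : ∀ j, 0 ≤ c j)
    (v : ℝ) (hv : 0 ≤ v)
    (q : Fin (n + 1))
    (hqv : ∀ j : Fin n, q ≤ j.castSucc → c j ≤ v) :
    0 ≤ v * α q -
        ∑ j ∈ Finset.univ.filter (fun j : Fin n => q ≤ j.castSucc),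
          c j * (α j.castSucc - α j.succ) :=
  socialmapf_individually_rational_general n α hα hαlast c v hv q hqv
end
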